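/- Let r ≥ 2 be an integer and t ≥ 0. Then s^{(r)}_{r^t + 1} = r^{2t+1} + 1 and (r + 1)·s^{(r)}_{r^t} = r^{2t+1} + 1; in particular s^{(r)}_{r^t+1} = (r+1)·s^{(r)}_{r^t}. -/

import Mathlib

/-- Moser function `m_r(n)`: reinterpret the base-`r` digits of `n` as base-`r²` digits,
i.e. `m_r(n) = Σ_i ν_i r^(2i)` where `n = Σ_i ν_i r^i` is the base-`r` expansion. -/
def moser (r n : ℕ) : ℕ := Nat.ofDigits (r ^ 2) (Nat.digits r n)

/-- `s^(r)_n = r · m_r(n−1) + 1` for `n ≥ 1`. -/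
def moserS (r n : ℕ) : ℕ := r * moser r (n - 1) + 1

/-- The `i`-th base-`r` digit of `n` (0 if beyond the expansion). -/
def dig (r n i : ℕ) : ℕ := (Nat.digits r n).getD i 0

/-- Josephus–Groër survivor function: with `M = N` if `N` is odd, `M = N − 1` otherwise,
and `M = Σ_j b_j 2^j` the binary expansion, `W(N) = 1 + Σ_{j odd} b_j 2^j`. -/
def W (N : ℕ) : ℕ :=
  let M := if N % 2 = 1 then N else N - 1
  1 + (((Nat.digits 2 M).zipIdx.filter (fun p => p.2 % 2 = 1)).map (fun p => p.1 * 2 ^ p.2)).sum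

/-!
`r ^ t` has base-`r` digits `0, …, 0, 1` and `r ^ t - 1` has digits `r - 1, …, r - 1` (`t` of
them). Reading these in base `r²` gives `m_r(r ^ t) = r ^ (2t)` and, since
`(r + 1)(r - 1) = r² - 1` turns the second list into the digits of `r ^ (2t) - 1` in base `r²`,
`(r + 1) · m_r(r ^ t - 1) = r ^ (2t) - 1`.
-/

namespace Nat

theorem digits_base_pow {b : ℕ} (hb : 1 < b) (t : ℕ) :
    digits b (b ^ t) = List.replicate t 0 ++ [1] := by
  simpa [digits_of_lt b 1 one_ne_zero hb] using digits_base_pow_mul hb (m := 1) (k := t) one_pos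

theorem digits_base_pow_sub_one {b : ℕ} (hb : 1 < b) (t : ℕ) :
    digits b (b ^ t - 1) = List.replicate t (b - 1) := by
  induction t with
  | zero => simp
  | succ t ih =>
    have hpos : 1 ≤ b ^ t := one_le_pow t b (by omega)
    have hsplit : b ^ (t + 1) - 1 = (b - 1) + b * (b ^ t - 1) := by
      rw [pow_succ', Nat.mul_sub, mul_one]
      have : b ≤ b * b ^ t := Nat.le_mul_of_pos_right b hpos
      omega
    rw [hsplit, digits_add b hb _ _ (by omega) (by omega), ih, List.replicate_succ]

theorem ofDigits_replicate_base_sub_one {b : ℕ} (hb : 1 < b) (t : ℕ) :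
    ofDigits b (List.replicate t (b - 1)) = b ^ t - 1 := by
  rw [← digits_base_pow_sub_one hb, ofDigits_digits]

theorem mul_ofDigits_replicate (a b d t : ℕ) :
    a * ofDigits b (List.replicate t d) = ofDigits b (List.replicate t (a * d)) := by
  induction t with
  | zero => simp
  | succ t ih => simp only [List.replicate_succ, ofDigits_cons, ← ih]; ring

end Nat

theorem moser_pow {r : ℕ} (hr : 1 < r) (t : ℕ) : moser r (r ^ t) = r ^ (2 * t) := by
  rw [moser, Nat.digits_base_pow hr, Nat.ofDigits_append, Nat.ofDigits_replicate_zero,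
    List.length_replicate, pow_mul]
  simp

theorem succ_mul_moser_pow_sub_one {r : ℕ} (hr : 1 < r) (t : ℕ) :
    (r + 1) * moser r (r ^ t - 1) = r ^ (2 * t) - 1 := by
  have hsq : (r + 1) * (r - 1) = r ^ 2 - 1 := by rw [← Nat.sq_sub_sq, one_pow]
  rw [moser, Nat.digits_base_pow_sub_one hr, Nat.mul_ofDigits_replicate, hsq,
    Nat.ofDigits_replicate_base_sub_one (Nat.one_lt_pow two_ne_zero hr), pow_mul]

/-- For `r ≥ 2` and `t ≥ 0`: `s^(r)_{r^t+1} = r^(2t+1) + 1`,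
`(r+1)·s^(r)_{r^t} = r^(2t+1) + 1`, and hence `s^(r)_{r^t+1} = (r+1)·s^(r)_{r^t}`. -/
theorem moserS_power_values (r : ℕ) (hr : 2 ≤ r) (t : ℕ) :
    moserS r (r ^ t + 1) = r ^ (2 * t + 1) + 1 ∧
    (r + 1) * moserS r (r ^ t) = r ^ (2 * t + 1) + 1 ∧
    moserS r (r ^ t + 1) = (r + 1) * moserS r (r ^ t) := by
  have hsucc : moserS r (r ^ t + 1) = r ^ (2 * t + 1) + 1 := by
    rw [moserS, Nat.add_sub_cancel, moser_pow hr, pow_succ, mul_comm]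
  have hpow : (r + 1) * moserS r (r ^ t) = r ^ (2 * t + 1) + 1 := by
    have hpos : 1 ≤ r ^ (2 * t) := Nat.one_le_pow _ _ (by omega)
    calc (r + 1) * moserS r (r ^ t)
        = r * ((r + 1) * moser r (r ^ t - 1)) + (r + 1) := by rw [moserS]; ring
      _ = r * (r ^ (2 * t) - 1) + (r + 1) := by rw [succ_mul_moser_pow_sub_one hr]
      _ = r ^ (2 * t + 1) + 1 := by
        rw [Nat.mul_sub, mul_one, pow_succ, mul_comm r]
        have : r ≤ r ^ (2 * t) * r := Nat.le_mul_of_pos_left r hpos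
        omega
  exact ⟨hsucc, hpow, hsucc.trans hpow.symm⟩
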